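/- arXiv:0811.4652 — 8 statements merged into one kernel-verified Lean document; each statement's English description precedes it below -/
import Mathlib

section
/- For n ≥ 2 and any fixed positive integer k, the identity G_n^{(k)}(x)·F_{n-2}(x^k) = G_{n-1}^{(k)}(x)·F_{n-1}(x^k) + (−1)^{n−1} holds as polynomials in x. -/
/-!
Both `G n` and `F n ∘ X ^ k` satisfy `u (n + 2) = X ^ k * u (n + 1) + u n`. For any two solutions
`g, h` of a common second-order recurrence of this shape, the cross difference
`g (m + 2) * h m - g (m + 1) * h (m + 1)` changes sign at every step (a Casoratian-type
invariant), and for `G` and `F ∘ X ^ k` its initial value is `-1`.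
-/

open Polynomial

section CrossDifference

variable {R : Type*} [CommRing R] {a : R} {g h : ℕ → R}

theorem cross_diff_succ_of_recurrence (hg : ∀ m, g (m + 2) = a * g (m + 1) + g m)
    (hh : ∀ m, h (m + 2) = a * h (m + 1) + h m) (m : ℕ) :
    g (m + 3) * h (m + 1) - g (m + 2) * h (m + 2) =
      -(g (m + 2) * h m - g (m + 1) * h (m + 1)) := by
  linear_combination h (m + 1) * hg (m + 1) - g (m + 2) * hh m

theorem cross_diff_eq_neg_one_pow_of_recurrence (hg : ∀ m, g (m + 2) = a * g (m + 1) + g m)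
    (hh : ∀ m, h (m + 2) = a * h (m + 1) + h m) (m : ℕ) :
    g (m + 2) * h m - g (m + 1) * h (m + 1) = (-1) ^ m * (g 2 * h 0 - g 1 * h 1) := by
  induction m with
  | zero => simp
  | succ m ih => linear_combination cross_diff_succ_of_recurrence hg hh m - ih

end CrossDifference

theorem G_F_relation_general (k : ℕ)
    (G F : ℕ → Polynomial ℝ)
    (hG0 : G 0 = -1) (hG1 : G 1 = X - 1)
    (hG : ∀ n, 2 ≤ n → G n = X ^ k * G (n - 1) + G (n - 2))
    (hF0 : F 0 = 1) (hF1 : F 1 = X)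
    (hF : ∀ n, 2 ≤ n → F n = X * F (n - 1) + F (n - 2)) :
    ∀ n, 2 ≤ n →
      G n * (F (n - 2)).comp (X ^ k) =
        G (n - 1) * (F (n - 1)).comp (X ^ k) + (-1 : Polynomial ℝ) ^ (n - 1) := by
  have hG' (m : ℕ) : G (m + 2) = X ^ k * G (m + 1) + G m := by
    simpa using hG (m + 2) (by omega)
  have hFk (m : ℕ) :
      (F (m + 2)).comp (X ^ k) = X ^ k * (F (m + 1)).comp (X ^ k) + (F m).comp (X ^ k) := by
    simp [hF (m + 2) (by omega), add_comp, mul_comp]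
  have hinit : G 2 * (F 0).comp (X ^ k) - G 1 * (F 1).comp (X ^ k) = -1 := by
    rw [hG' 0, hG0, hG1, hF0, hF1]
    simp only [one_comp, X_comp]
    ring
  intro n hn
  obtain ⟨m, rfl⟩ : ∃ m, n = m + 2 := ⟨n - 2, by omega⟩
  have hcross :=
    cross_diff_eq_neg_one_pow_of_recurrence (h := fun m => (F m).comp (X ^ k)) hG' hFk m
  rw [hinit] at hcross
  simp only [Nat.add_sub_cancel, show m + 2 - 1 = m + 1 by omega]
  linear_combination hcross

theorem G_F_relation (k : ℕ) (hk : 1 ≤ k)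
    (G F : ℕ → Polynomial ℝ)
    (hG0 : G 0 = -1) (hG1 : G 1 = X - 1)
    (hG : ∀ n, 2 ≤ n → G n = X ^ k * G (n - 1) + G (n - 2))
    (hF0 : F 0 = 1) (hF1 : F 1 = X)
    (hF : ∀ n, 2 ≤ n → F n = X * F (n - 1) + F (n - 2)) :
    ∀ n, 2 ≤ n →
      G n * (F (n - 2)).comp (X ^ k) =
        G (n - 1) * (F (n - 1)).comp (X ^ k) + (-1 : Polynomial ℝ) ^ (n - 1) :=
  G_F_relation_general k G F hG0 hG1 hG hF0 hF1 hF
end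

section
/- For n ≥ 2 and fixed positive integer k, the identity F_{2n-3}(x^k)·G_{2n}^{(k)}(x) = F_{2n-1}(x^k)·G_{2n-2}^{(k)}(x) + x^k holds as polynomials in x. -/
/-!
Write `y = X ^ k`. Both `a_j = F_j(y)` and `b_j = G_{j+1}` satisfy `u_{j+2} = y u_{j+1} + u_j`,
so their Casoratian `a_j b_{j+1} - a_{j+1} b_j` only changes sign from one index to the next;
at `j = 0` it is `G_2 - y G_1 = -1`. One more step of the recurrence turns the Casoratian at an
odd index `j` into `a_j b_{j+2} - a_{j+2} b_j = y`, which is the identity with `j = 2n - 3`.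
-/

open Polynomial

section SecondOrderRecurrence

variable {R : Type*} [CommRing R] {c : R} {a b : ℕ → R}

theorem casoratian_eq_neg_one_pow_mul (ha : ∀ n, a (n + 2) = c * a (n + 1) + a n)
    (hb : ∀ n, b (n + 2) = c * b (n + 1) + b n) (n : ℕ) :
    a n * b (n + 1) - a (n + 1) * b n = (-1) ^ n * (a 0 * b 1 - a 1 * b 0) := by
  induction n with
  | zero => ring
  | succ n ih => rw [ha, hb, pow_succ]; linear_combination -ih

theorem mul_shift_two_sub_eq (ha : ∀ n, a (n + 2) = c * a (n + 1) + a n)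
    (hb : ∀ n, b (n + 2) = c * b (n + 1) + b n) (n : ℕ) :
    a n * b (n + 2) - a (n + 2) * b n = (-1) ^ n * c * (a 0 * b 1 - a 1 * b 0) := by
  rw [ha, hb]
  linear_combination c * casoratian_eq_neg_one_pow_mul ha hb n

end SecondOrderRecurrence

theorem even_index_relation_general (k : ℕ)
    (G F : ℕ → Polynomial ℝ)
    (hG0 : G 0 = -1) (hG1 : G 1 = X - 1)
    (hG : ∀ n, 2 ≤ n → G n = X ^ k * G (n - 1) + G (n - 2))
    (hF0 : F 0 = 1) (hF1 : F 1 = X)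
    (hF : ∀ n, 2 ≤ n → F n = X * F (n - 1) + F (n - 2)) :
    ∀ n, 2 ≤ n →
      (F (2 * n - 3)).comp (X ^ k) * G (2 * n) =
        (F (2 * n - 1)).comp (X ^ k) * G (2 * n - 2) + X ^ k := by
  intro n hn
  obtain ⟨m, rfl⟩ : ∃ m, n = m + 2 := ⟨n - 2, by omega⟩
  have hFcomp : ∀ j, (F (j + 2)).comp (X ^ k) =
      X ^ k * (F (j + 1)).comp (X ^ k) + (F j).comp (X ^ k) := fun j ↦ by
    simp [hF (j + 2) (by omega), add_comp, mul_comp]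
  have hGshift : ∀ j, G (j + 2 + 1) = X ^ k * G (j + 1 + 1) + G (j + 1) :=
    fun j ↦ hG _ (by omega)
  have hG2 : G 2 = X ^ k * (X - 1) - 1 := by
    rw [hG 2 le_rfl, hG1, hG0]; ring
  have key := mul_shift_two_sub_eq (c := X ^ k) (a := fun j ↦ (F j).comp (X ^ k))
    (b := fun j ↦ G (j + 1)) hFcomp hGshift (2 * m + 1)
  rw [show 2 * (m + 2) - 3 = 2 * m + 1 by omega, show 2 * (m + 2) - 1 = 2 * m + 1 + 2 by omega,
    show 2 * (m + 2) - 2 = 2 * m + 1 + 1 by omega, show 2 * (m + 2) = 2 * m + 1 + 2 + 1 by omega]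
  simp only [pow_succ, pow_mul, hF0, hF1, one_comp, X_comp, hG1, hG2] at key
  linear_combination key

theorem even_index_relation (k : ℕ) (hk : 1 ≤ k)
    (G F : ℕ → Polynomial ℝ)
    (hG0 : G 0 = -1) (hG1 : G 1 = X - 1)
    (hG : ∀ n, 2 ≤ n → G n = X ^ k * G (n - 1) + G (n - 2))
    (hF0 : F 0 = 1) (hF1 : F 1 = X)
    (hF : ∀ n, 2 ≤ n → F n = X * F (n - 1) + F (n - 2)) :
    ∀ n, 2 ≤ n →
      (F (2 * n - 3)).comp (X ^ k) * G (2 * n) =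
        (F (2 * n - 1)).comp (X ^ k) * G (2 * n - 2) + X ^ k :=
  even_index_relation_general k G F hG0 hG1 hG hF0 hF1 hF
end

section
/- For n ≥ 1 and fixed positive integer k, the identity F_{2n-2}(x^k)·G_{2n+1}^{(k)}(x) = F_{2n}(x^k)·G_{2n-1}^{(k)}(x) − x^k holds as polynomials in x. -/
/-! With `y = x^k`, both `n ↦ F_n(y)` and `n ↦ G_{n+1}^{(k)}(x)` solve the recurrence
`u (n+2) = y u (n+1) + u n`. The Casoratian `f m g (m+1) - f (m+1) g m` of two solutions of this
recurrence alternates in sign, and here it starts at `-1`; the claimed identity is `y` times the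
Casoratian at the even index `2n - 2`. -/

open Polynomial

section Recurrence

variable {R : Type*} [CommRing R] {a : R} {f g : ℕ → R}

theorem recurrence_of_two_le {u : ℕ → R} (h : ∀ n, 2 ≤ n → u n = a * u (n - 1) + u (n - 2))
    (n : ℕ) : u (n + 2) = a * u (n + 1) + u n :=
  h (n + 2) (Nat.le_add_left 2 n)

variable (hf : ∀ n, f (n + 2) = a * f (n + 1) + f n) (hg : ∀ n, g (n + 2) = a * g (n + 1) + g n)
include hf hg

theorem casoratian_eq_neg_one_pow_mul_s5 (m : ℕ) :
    f m * g (m + 1) - f (m + 1) * g m = (-1) ^ m * (f 0 * g 1 - f 1 * g 0) := by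
  induction m with
  | zero => ring
  | succ m ih =>
    rw [hf, hg, pow_succ]
    linear_combination (-1) * ih

theorem mul_shift_two_sub_eq_mul_casoratian (m : ℕ) :
    f m * g (m + 2) - f (m + 2) * g m = a * (f m * g (m + 1) - f (m + 1) * g m) := by
  rw [hf, hg]
  ring

end Recurrence

theorem odd_index_relation_general (k : ℕ)
    (G F : ℕ → Polynomial ℝ)
    (hG0 : G 0 = -1) (hG1 : G 1 = X - 1)
    (hG : ∀ n, 2 ≤ n → G n = X ^ k * G (n - 1) + G (n - 2))
    (hF0 : F 0 = 1) (hF1 : F 1 = X)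
    (hF : ∀ n, 2 ≤ n → F n = X * F (n - 1) + F (n - 2)) :
    ∀ n, 1 ≤ n →
      (F (2 * n - 2)).comp (X ^ k) * G (2 * n + 1) =
        (F (2 * n)).comp (X ^ k) * G (2 * n - 1) - X ^ k := by
  intro n hn
  obtain ⟨m, rfl⟩ : ∃ m, n = m + 1 := ⟨n - 1, by omega⟩
  set f : ℕ → ℝ[X] := fun n ↦ (F n).comp (X ^ k) with hf_def
  set g : ℕ → ℝ[X] := fun n ↦ G (n + 1) with hg_def
  have hf : ∀ n, f (n + 2) = X ^ k * f (n + 1) + f n := fun n ↦ by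
    simp only [hf_def, recurrence_of_two_le hF, add_comp, mul_comp, X_comp]
  have hg : ∀ n, g (n + 2) = X ^ k * g (n + 1) + g n := fun n ↦ recurrence_of_two_le hG (n + 1)
  have hcas : f (2 * m) * g (2 * m + 1) - f (2 * m + 1) * g (2 * m) = -1 := by
    have hG2 : G 2 = X ^ k * G 1 + G 0 := recurrence_of_two_le hG 0
    rw [casoratian_eq_neg_one_pow_mul_s5 hf hg, (even_two_mul m).neg_one_pow]
    simp only [hf_def, hg_def, hG2, hF0, hF1, hG0, hG1, one_comp, X_comp]
    ring
  have key := mul_shift_two_sub_eq_mul_casoratian hf hg (2 * m)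
  rw [hcas] at key
  rw [show 2 * (m + 1) - 2 = 2 * m by omega, show 2 * (m + 1) - 1 = 2 * m + 1 by omega]
  linear_combination key

theorem odd_index_relation (k : ℕ) (hk : 1 ≤ k)
    (G F : ℕ → Polynomial ℝ)
    (hG0 : G 0 = -1) (hG1 : G 1 = X - 1)
    (hG : ∀ n, 2 ≤ n → G n = X ^ k * G (n - 1) + G (n - 2))
    (hF0 : F 0 = 1) (hF1 : F 1 = X)
    (hF : ∀ n, 2 ≤ n → F n = X * F (n - 1) + F (n - 2)) :
    ∀ n, 1 ≤ n →
      (F (2 * n - 2)).comp (X ^ k) * G (2 * n + 1) =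
        (F (2 * n)).comp (X ^ k) * G (2 * n - 1) - X ^ k :=
  odd_index_relation_general k G F hG0 hG1 hG hF0 hF1 hF
end

section
/- Fix a positive integer k and let g_n denote the maximal real root of G_n^{(k)}. Then the sequence (g_{2n})_{n≥1} is strictly decreasing. -/
/-!
For `x ≥ 2` every `G_n` with `n ≥ 1` is at least `1`, and `G_n(1) < 0` for `n ≥ 2`, so the
largest root `g_n` lies in `(1, 2)` and `G_n > 0` to the right of it. Inserting the root
`a = g_{n+2}` into the recurrence shows that `g_n < g_{n+2}` forces `G_{n+3}(a) < 0` and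
`G_{n+4}(a) < 0`, hence `g_{n+2} < g_{n+3}, g_{n+4}`; starting from `g_1 = 1`, the odd roots
increase and each lies below the next even one. Finally
`G_{n+4} = (x^{2k} + 1) G_{n+2} + x^k G_{n+1}` is positive from `g_{n+2}` on whenever
`g_{n+1} < g_{n+2}`, so `g_{n+4} < g_{n+2}`.
-/

def genFib (k : ℕ) : ℕ → ℝ → ℝ
  | 0, _ => -1
  | 1, x => x - 1
  | n + 2, x => x ^ k * genFib k (n + 1) x + genFib k n x

section genFib

variable {k : ℕ}

theorem genFib_add_two (k n : ℕ) (x : ℝ) :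
    genFib k (n + 2) x = x ^ k * genFib k (n + 1) x + genFib k n x := rfl

theorem genFib_add_four (k n : ℕ) (x : ℝ) :
    genFib k (n + 4) x = (x ^ k * x ^ k + 1) * genFib k (n + 2) x + x ^ k * genFib k (n + 1) x := by
  rw [genFib_add_two, genFib_add_two k (n + 1)]
  ring

theorem eq_genFib_of_recurrence {G : ℕ → ℝ → ℝ} (hG0 : ∀ x, G 0 x = -1)
    (hG1 : ∀ x, G 1 x = x - 1)
    (hG : ∀ n, 2 ≤ n → ∀ x, G n x = x ^ k * G (n - 1) x + G (n - 2) x) : G = genFib k := by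
  funext n x
  induction n using Nat.strong_induction_on with
  | _ n ih =>
    match n with
    | 0 => exact hG0 x
    | 1 => exact hG1 x
    | n + 2 =>
      rw [hG (n + 2) le_add_self x, genFib_add_two, ← ih (n + 1) (by omega), ← ih n (by omega)]
      rfl

theorem continuous_genFib (k : ℕ) : ∀ n, Continuous (genFib k n)
  | 0 => continuous_const
  | 1 => continuous_id.sub continuous_const
  | n + 2 => ((continuous_pow k).mul (continuous_genFib k (n + 1))).add (continuous_genFib k n)

theorem one_le_genFib (hk : 1 ≤ k) {x : ℝ} (hx : 2 ≤ x) {n : ℕ} (hn : 1 ≤ n) :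
    1 ≤ genFib k n x := by
  have hxk : 2 ≤ x ^ k := hx.trans (le_self_pow₀ (by linarith) (by omega))
  have key : ∀ n, -1 ≤ genFib k n x ∧ 1 ≤ genFib k (n + 1) x := by
    intro n
    induction n with
    | zero => exact ⟨le_rfl, by simp only [genFib]; linarith⟩
    | succ n ih =>
      obtain ⟨h₀, h₁⟩ := ih
      exact ⟨by linarith, by rw [genFib_add_two]; nlinarith⟩
  obtain ⟨n, rfl⟩ := Nat.exists_eq_add_of_le' hn
  exact (key n).2

theorem genFib_at_one_neg {n : ℕ} (hn : 2 ≤ n) : genFib k n 1 < 0 := by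
  have key : ∀ n, genFib k (n + 1) 1 ≤ 0 ∧ genFib k (n + 2) 1 < 0 := by
    intro n
    induction n with
    | zero => norm_num [genFib]
    | succ n ih =>
      obtain ⟨h₁, h₂⟩ := ih
      refine ⟨h₂.le, ?_⟩
      rw [genFib_add_two, one_pow, one_mul]
      linarith
  obtain ⟨n, rfl⟩ := Nat.exists_eq_add_of_le' hn
  exact (key n).2

end genFib

section LargestRoot

variable {k n : ℕ} {r : ℝ}

theorem lt_of_isGreatest_of_genFib_neg (hk : 1 ≤ k) (hn : 1 ≤ n)
    (hr : IsGreatest {x | genFib k n x = 0} r) {a : ℝ} (ha : genFib k n a < 0) : a < r := by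
  have ha2 : a < 2 := by
    by_contra! h
    linarith [one_le_genFib hk h hn]
  obtain ⟨y, hy, hy0⟩ := intermediate_value_Ioo ha2.le (continuous_genFib k n).continuousOn
    ⟨ha, by linarith [one_le_genFib hk le_rfl hn]⟩
  exact hy.1.trans_le (hr.2 hy0)

theorem genFib_pos_of_isGreatest_lt (hk : 1 ≤ k) (hn : 1 ≤ n)
    (hr : IsGreatest {x | genFib k n x = 0} r) {x : ℝ} (hx : r < x) : 0 < genFib k n x := by
  by_contra! h
  rcases h.lt_or_eq with h | h
  · exact (lt_of_isGreatest_of_genFib_neg hk hn hr h).not_gt hx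
  · exact (hr.2 h).not_gt hx

theorem one_lt_of_isGreatest (hk : 1 ≤ k) (hn : 2 ≤ n)
    (hr : IsGreatest {x | genFib k n x = 0} r) : 1 < r :=
  lt_of_isGreatest_of_genFib_neg hk (by omega) hr (genFib_at_one_neg hn)

variable {g : ℕ → ℝ}

theorem largestRoot_add_two_lt_of_lt (hk : 1 ≤ k)
    (hg : ∀ n, 1 ≤ n → IsGreatest {x | genFib k n x = 0} (g n))
    (hn : 1 ≤ n) (h : g n < g (n + 2)) :
    g (n + 2) < g (n + 3) ∧ g (n + 2) < g (n + 4) := by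
  set a := g (n + 2)
  have hak : 0 < a ^ k :=
    pow_pos (one_pos.trans (one_lt_of_isGreatest hk le_add_self (hg _ (by omega)))) k
  have h₂ : genFib k (n + 2) a = 0 := (hg _ (by omega)).1
  have h₀ : 0 < genFib k n a := genFib_pos_of_isGreatest_lt hk hn (hg n hn) h
  have h₁ : genFib k (n + 1) a < 0 := by
    rw [genFib_add_two] at h₂
    exact neg_of_mul_neg_right (by linarith) hak.le
  have h₃ : genFib k (n + 3) a < 0 := by rwa [genFib_add_two, h₂, mul_zero, zero_add]
  have h₄ : genFib k (n + 4) a < 0 := by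
    rw [genFib_add_two, h₂, add_zero]
    exact mul_neg_of_pos_of_neg hak h₃
  exact ⟨lt_of_isGreatest_of_genFib_neg hk (by omega) (hg _ (by omega)) h₃,
    lt_of_isGreatest_of_genFib_neg hk (by omega) (hg _ (by omega)) h₄⟩

theorem largestRoot_add_four_lt (hk : 1 ≤ k)
    (hg : ∀ n, 1 ≤ n → IsGreatest {x | genFib k n x = 0} (g n))
    (h : g (n + 1) < g (n + 2)) : g (n + 4) < g (n + 2) := by
  by_contra! hle
  set x := g (n + 4)
  have hx : 1 < x := (one_lt_of_isGreatest hk le_add_self (hg _ (by omega))).trans_le hle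
  have hxk : 0 < x ^ k := pow_pos (one_pos.trans hx) k
  have h₁ : 0 < genFib k (n + 1) x :=
    genFib_pos_of_isGreatest_lt hk (by omega) (hg _ (by omega)) (h.trans_le hle)
  have h₂ : 0 ≤ genFib k (n + 2) x := by
    rcases hle.eq_or_lt with heq | hlt
    · exact heq ▸ (hg _ (by omega)).1.ge
    · exact (genFib_pos_of_isGreatest_lt hk (by omega) (hg _ (by omega)) hlt).le
  have h₄ : genFib k (n + 4) x = 0 := (hg _ (by omega)).1
  rw [genFib_add_four] at h₄
  nlinarith [mul_pos hxk h₁, mul_nonneg (by positivity : (0 : ℝ) ≤ x ^ k * x ^ k + 1) h₂]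

theorem largestRoot_odd_lt (hk : 1 ≤ k)
    (hg : ∀ n, 1 ≤ n → IsGreatest {x | genFib k n x = 0} (g n)) (m : ℕ) :
    g (2 * m + 1) < g (2 * m + 2) ∧ g (2 * m + 1) < g (2 * m + 3) := by
  induction m with
  | zero =>
    have hg1 : g 1 = 1 := sub_eq_zero.mp (hg 1 le_rfl).1
    rw [hg1]
    exact ⟨one_lt_of_isGreatest hk le_rfl (hg 2 (by omega)),
      one_lt_of_isGreatest hk (by omega) (hg 3 (by omega))⟩
  | succ m ih => exact largestRoot_add_two_lt_of_lt hk hg (by omega) ih.2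

end LargestRoot

theorem g_even_strict_anti (k : ℕ) (hk : 1 ≤ k) (G : ℕ → ℝ → ℝ)
    (hG0 : ∀ x, G 0 x = -1) (hG1 : ∀ x, G 1 x = x - 1)
    (hG : ∀ n, 2 ≤ n → ∀ x, G n x = x ^ k * G (n - 1) x + G (n - 2) x)
    (g : ℕ → ℝ)
    (hg : ∀ n, 1 ≤ n → G n (g n) = 0 ∧ ∀ x : ℝ, G n x = 0 → x ≤ g n) :
    StrictAntiOn (fun n => g (2 * n)) (Set.Ici 1) := by
  obtain rfl := eq_genFib_of_recurrence hG0 hG1 hG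
  have hg' : ∀ n, 1 ≤ n → IsGreatest {x | genFib k n x = 0} (g n) := hg
  refine strictAntiOn_Ici_of_lt_pred fun m hm => ?_
  obtain ⟨m, rfl⟩ : ∃ j, m = j + 2 := ⟨m - 2, by omega⟩
  rw [Order.pred_eq_sub_one]
  exact largestRoot_add_four_lt hk hg' (largestRoot_odd_lt hk hg' m).1
end

section
/- Fix a positive integer k and let g_n denote the maximal real root of G_n^{(k)}. Then the sequence (g_{2n-1})_{n≥1} is strictly increasing. -/
/-!
Write `G (n + 2) = x ^ k * G (n + 1) + G n`. At a root `a` of `G (n + 2)` the recurrence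
gives `G (n + 4) a = -G n a`. Every `G (n + 1)` is continuous and tends to be positive
(it is `≥ 1` on `[3, ∞)`), so it is positive to the right of its largest root and any point
where it is negative lies left of that root. By induction `g (2n+1) < g (2n+3)`: at
`a = g (2n+3)` we have `G (2n+1) a > 0` because `a > g (2n+1)`, hence `G (2n+5) a < 0`,
i.e. `a < g (2n+5)`. The base case is `G 3 1 = -1` with `g 1 = 1`.
-/

open Filter

section Roots

variable {f : ℝ → ℝ} {r x : ℝ}

lemma pos_of_upperBounds_zeros_lt (hf : Continuous f) (hr : r ∈ upperBounds (f ⁻¹' {0}))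
    (hpos : ∀ᶠ y in atTop, 0 < f y) (hx : r < x) : 0 < f x := by
  obtain ⟨b, hfb, hb⟩ := (hpos.and (eventually_gt_atTop r)).exists
  by_contra! hfx
  obtain ⟨y, hy, hy0⟩ := isPreconnected_Ioi.intermediate_value hx hb hf.continuousOn
    ⟨hfx, hfb.le⟩
  exact (not_le.2 hy) (hr hy0)

lemma lt_of_neg_of_isGreatest_zeros (hf : Continuous f) (hr : IsGreatest (f ⁻¹' {0}) r)
    (hpos : ∀ᶠ y in atTop, 0 < f y) (hx : f x < 0) : x < r := by
  by_contra! hrx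
  rcases hrx.eq_or_lt with rfl | hlt
  · exact hx.ne hr.1
  · exact hx.not_gt (pos_of_upperBounds_zeros_lt hf hr.2 hpos hlt)

end Roots

lemma add_four_eq_neg_of_add_two_eq_zero {R : Type*} [CommRing R] {u : ℕ → R} {c : R}
    (hu : ∀ n, u (n + 2) = c * u (n + 1) + u n) {m : ℕ} (hm : u (m + 2) = 0) :
    u (m + 4) = -u m := by
  have h3 : u (m + 3) = u (m + 1) := by rw [hu (m + 1), hm, mul_zero, zero_add]
  rw [hu (m + 2), h3, hm, add_zero, eq_neg_iff_add_eq_zero, ← hu m, hm]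

section Recurrence

variable {k : ℕ} {G : ℕ → ℝ → ℝ}

lemma continuous_of_recurrence (hG0 : ∀ x, G 0 x = -1) (hG1 : ∀ x, G 1 x = x - 1)
    (hrec : ∀ n x, G (n + 2) x = x ^ k * G (n + 1) x + G n x) (n : ℕ) : Continuous (G n) := by
  induction n using Nat.twoStepInduction with
  | zero => rw [funext hG0]; fun_prop
  | one => rw [funext hG1]; fun_prop
  | more n ih₀ ih₁ => rw [funext (hrec n)]; fun_prop

lemma one_le_of_three_le (hG0 : ∀ x, G 0 x = -1) (hG1 : ∀ x, G 1 x = x - 1)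
    (hrec : ∀ n x, G (n + 2) x = x ^ k * G (n + 1) x + G n x) {x : ℝ} (hx : 3 ≤ x) (n : ℕ) :
    1 ≤ G (n + 1) x := by
  have hxk : 1 ≤ x ^ k := one_le_pow₀ (by linarith)
  induction n using Nat.twoStepInduction with
  | zero => rw [hG1]; linarith
  | one => rw [hrec, hG1, hG0]; nlinarith
  | more n ih₀ ih₁ => rw [hrec]; nlinarith

end Recurrence

theorem g_odd_strict_mono_general (k : ℕ) (G : ℕ → ℝ → ℝ)
    (hG0 : ∀ x, G 0 x = -1) (hG1 : ∀ x, G 1 x = x - 1)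
    (hG : ∀ n, 2 ≤ n → ∀ x, G n x = x ^ k * G (n - 1) x + G (n - 2) x)
    (g : ℕ → ℝ)
    (hg : ∀ n, 1 ≤ n → G n (g n) = 0 ∧ ∀ x : ℝ, G n x = 0 → x ≤ g n) :
    StrictMonoOn (fun n => g (2 * n - 1)) (Set.Ici 1) := by
  have hrec : ∀ n x, G (n + 2) x = x ^ k * G (n + 1) x + G n x := fun n => hG (n + 2) (by omega)
  have hcont (n : ℕ) := continuous_of_recurrence hG0 hG1 hrec n
  have hgreat (n : ℕ) : IsGreatest (G (n + 1) ⁻¹' {0}) (g (n + 1)) := hg (n + 1) (by omega)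
  have hpos (n : ℕ) : ∀ᶠ x in atTop, 0 < G (n + 1) x :=
    eventually_atTop.2 ⟨3, fun x hx => one_pos.trans_le (one_le_of_three_le hG0 hG1 hrec hx n)⟩
  have hneg (n : ℕ) {a : ℝ} : G (n + 1) a < 0 → a < g (n + 1) :=
    lt_of_neg_of_isGreatest_zeros (hcont _) (hgreat n) (hpos n)
  have step (n : ℕ) : g (2 * n + 1) < g (2 * n + 3) := by
    induction n with
    | zero =>
      have hg1 : g 1 = 1 := by linarith [(hg 1 le_rfl).1, hG1 (g 1)]
      have hG31 : G 3 1 < 0 := by norm_num [hrec, hG1, hG0]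
      simpa [hg1] using hneg 2 hG31
    | succ n ih =>
      show g (2 * n + 3) < g (2 * n + 5)
      have hflip : G (2 * n + 5) (g (2 * n + 3)) = -G (2 * n + 1) (g (2 * n + 3)) :=
        add_four_eq_neg_of_add_two_eq_zero (u := fun j => G j (g (2 * n + 3)))
          (fun j => hrec j _) (hgreat (2 * n + 2)).1
      have hprev := pos_of_upperBounds_zeros_lt (hcont _) (hgreat (2 * n)).2 (hpos (2 * n)) ih
      exact hneg (2 * n + 4) (show G (2 * n + 5) _ < 0 by linarith)
  have hmono : StrictMono fun m => g (2 * m + 1) := strictMono_nat_of_lt_succ step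
  intro a (ha : 1 ≤ a) b (hb : 1 ≤ b) hab
  obtain ⟨a, rfl⟩ := Nat.exists_eq_add_of_le' ha
  obtain ⟨b, rfl⟩ := Nat.exists_eq_add_of_le' hb
  simpa [Nat.mul_succ] using hmono (Nat.succ_lt_succ_iff.1 hab)

theorem g_odd_strict_mono (k : ℕ) (hk : 1 ≤ k) (G : ℕ → ℝ → ℝ)
    (hG0 : ∀ x, G 0 x = -1) (hG1 : ∀ x, G 1 x = x - 1)
    (hG : ∀ n, 2 ≤ n → ∀ x, G n x = x ^ k * G (n - 1) x + G (n - 2) x)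
    (g : ℕ → ℝ)
    (hg : ∀ n, 1 ≤ n → G n (g n) = 0 ∧ ∀ x : ℝ, G n x = 0 → x ≤ g n) :
    StrictMonoOn (fun n => g (2 * n - 1)) (Set.Ici 1) :=
  g_odd_strict_mono_general k G hG0 hG1 hG g hg
end

section
/- If k is an even positive integer, then H^{(k)}(x) = x^k − x^{k−1} + x − 2 has exactly one negative real root. -/
/-!
Substituting `y = -x` and using that `k - 1` is odd, the equation becomes
`(y + 1) (y ^ (k - 1) - 1) = 1`. For `0 < y ≤ 1` the left side is `≤ 0`, and on `[1, ∞)` it is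
strictly increasing from `0` to `∞`, so it takes the value `1` exactly once.
-/

open Set

lemma strictMonoOn_add_one_mul_pow_sub_one {n : ℕ} (hn : n ≠ 0) :
    StrictMonoOn (fun y : ℝ => (y + 1) * (y ^ n - 1)) (Ici 1) := by
  intro a (ha : 1 ≤ a) b _ hab
  have hpow : a ^ n - 1 < b ^ n - 1 := by
    linarith [pow_lt_pow_left₀ hab (by linarith) hn]
  exact mul_lt_mul'' (by linarith) hpow (by linarith) (by linarith [one_le_pow₀ (n := n) ha])

lemma add_one_mul_pow_sub_one_nonpos {n : ℕ} {y : ℝ} (hy : 0 ≤ y) (hy1 : y ≤ 1) :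
    (y + 1) * (y ^ n - 1) ≤ 0 :=
  mul_nonpos_of_nonneg_of_nonpos (by linarith) (by linarith [pow_le_one₀ (n := n) hy hy1])

theorem existsUnique_pos_add_one_mul_pow_sub_one_eq {n : ℕ} (hn : n ≠ 0) {c : ℝ} (hc : 0 < c) :
    ∃! y : ℝ, 0 < y ∧ (y + 1) * (y ^ n - 1) = c := by
  set f : ℝ → ℝ := fun y => (y + 1) * (y ^ n - 1)
  have hroot_ge_one : ∀ y, 0 < y → f y = c → 1 ≤ y := fun y hy hfy => by
    by_contra! hy1
    linarith [add_one_mul_pow_sub_one_nonpos (n := n) hy.le hy1.le]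
  -- `f (1 + c) ≥ (2 + c) c ≥ c` since `(1 + c) ^ n ≥ 1 + c`.
  have hf_large : c ≤ f (1 + c) := by
    have : 1 + c ≤ (1 + c) ^ n := le_self_pow₀ (by linarith) hn
    simp only [f]
    nlinarith
  obtain ⟨y, ⟨hy1, -⟩, hfy⟩ : c ∈ f '' Icc 1 (1 + c) :=
    intermediate_value_Icc (by linarith) (by fun_prop) ⟨by simp [f, hc.le], hf_large⟩
  refine ⟨y, ⟨by linarith, hfy⟩, fun z ⟨hz, hfz⟩ => ?_⟩
  exact strictMonoOn_add_one_mul_pow_sub_one hn |>.injOn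
    (hroot_ge_one z hz hfz) (hroot_ge_one y (by linarith) hfy) (hfz.trans hfy.symm)

theorem H_even_unique_neg_root (k : ℕ) (hk : 1 ≤ k) (heven : Even k) :
    ∃! x : ℝ, x < 0 ∧ x ^ k - x ^ (k - 1) + x - 2 = 0 := by
  obtain ⟨n, rfl⟩ : ∃ n, k = n + 1 := ⟨k - 1, by omega⟩
  have hodd : Odd n := Nat.not_even_iff_odd.mp (Nat.even_add_one.mp heven)
  have hsubst : ∀ x : ℝ, x ^ (n + 1) - x ^ n + x - 2 = (-x + 1) * ((-x) ^ n - 1) - 1 := by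
    intro x
    rw [hodd.neg_pow]
    ring
  obtain ⟨y, ⟨hy, hfy⟩, huniq⟩ :=
    existsUnique_pos_add_one_mul_pow_sub_one_eq (n := n) hodd.pos.ne' one_pos
  simp only [Nat.add_sub_cancel, hsubst]
  refine ⟨-y, ⟨by linarith, by simp [hfy]⟩, fun x ⟨hx, hroot⟩ => ?_⟩
  linarith [huniq (-x) ⟨by linarith, by linarith⟩]
end

section
/- Fix a positive integer k and let g_n be the maximal real root of G_n^{(k)} for n ≥ 1. Then 1 ≤ g_n ≤ 2 for all n ≥ 1. -/
/-!
`G n 1 ≤ 0` for every `n` and `G n x > 0` for every `x > 2` and `n ≥ 1`, because a recurrence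
`u (n + 2) = a * u (n + 1) + u n` with `a ≥ 0` preserves the sign of two consecutive terms.
So no root of `G n` exceeds `2`, while the intermediate value theorem gives a root in `[1, 3]`,
which the largest root `g n` dominates.
-/

section LinearRecurrence

variable {u : ℕ → ℝ} {a : ℝ}

theorem nonpos_of_linear_rec (ha : 0 ≤ a) (hu : ∀ n, u (n + 2) = a * u (n + 1) + u n)
    (h0 : u 0 ≤ 0) (h1 : u 1 ≤ 0) (n : ℕ) : u n ≤ 0 := by
  suffices ∀ n, u n ≤ 0 ∧ u (n + 1) ≤ 0 from (this n).1
  intro n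
  induction n with
  | zero => exact ⟨h0, h1⟩
  | succ n ih =>
    refine ⟨ih.2, ?_⟩
    rw [hu]
    linarith [mul_nonpos_of_nonneg_of_nonpos ha ih.2, ih.1]

theorem pos_of_linear_rec (ha : 0 ≤ a) (hu : ∀ n, u (n + 2) = a * u (n + 1) + u n)
    (h0 : 0 < u 0) (h1 : 0 < u 1) (n : ℕ) : 0 < u n := by
  suffices ∀ n, 0 < u n ∧ 0 < u (n + 1) from (this n).1
  intro n
  induction n with
  | zero => exact ⟨h0, h1⟩
  | succ n ih =>
    refine ⟨ih.2, ?_⟩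
    rw [hu]
    linarith [mul_nonneg ha ih.2.le, ih.1]

end LinearRecurrence

theorem continuous_of_poly_rec {k : ℕ} {G : ℕ → ℝ → ℝ}
    (hG : ∀ n x, G (n + 2) x = x ^ k * G (n + 1) x + G n x)
    (h0 : Continuous (G 0)) (h1 : Continuous (G 1)) (n : ℕ) : Continuous (G n) := by
  suffices ∀ n, Continuous (G n) ∧ Continuous (G (n + 1)) from (this n).1
  intro n
  induction n with
  | zero => exact ⟨h0, h1⟩
  | succ n ih =>
    refine ⟨ih.2, ?_⟩
    rw [show G (n + 2) = fun x => x ^ k * G (n + 1) x + G n x from funext (hG n)]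
    exact ((continuous_pow k).mul ih.2).add ih.1

theorem g_bounds_general (k : ℕ) (G : ℕ → ℝ → ℝ)
    (hG0 : ∀ x, G 0 x = -1) (hG1 : ∀ x, G 1 x = x - 1)
    (hG : ∀ n, 2 ≤ n → ∀ x, G n x = x ^ k * G (n - 1) x + G (n - 2) x)
    (g : ℕ → ℝ)
    (hg : ∀ n, 1 ≤ n → G n (g n) = 0 ∧ ∀ x : ℝ, G n x = 0 → x ≤ g n) :
    ∀ n, 1 ≤ n → 1 ≤ g n ∧ g n ≤ 2 := by
  have hrec : ∀ n x, G (n + 2) x = x ^ k * G (n + 1) x + G n x := fun n x => by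
    simpa using hG (n + 2) (by omega) x
  have hpos : ∀ n, 1 ≤ n → ∀ x, 2 < x → 0 < G n x := by
    intro n hn x hx
    obtain ⟨m, rfl⟩ := Nat.exists_eq_add_of_le' hn
    have hxk : 1 ≤ x ^ k := one_le_pow₀ (by linarith)
    refine pos_of_linear_rec (u := fun m => G (m + 1) x) (a := x ^ k) (by positivity)
      (fun m => hrec (m + 1) x) ?_ ?_ m
    · simp only [hG1]; linarith
    · simp only [hrec, hG1, hG0]; nlinarith
  have hcont : ∀ n, Continuous (G n) := continuous_of_poly_rec hrec
    (by rw [funext hG0]; fun_prop) (by rw [funext hG1]; fun_prop)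
  have hnonpos : ∀ n, G n 1 ≤ 0 := nonpos_of_linear_rec (u := fun n => G n 1) zero_le_one
    (fun n => by simpa using hrec n 1) (by simp [hG0]) (by simp [hG1])
  intro n hn
  obtain ⟨hroot, hmax⟩ := hg n hn
  constructor
  · obtain ⟨c, hc, hc0⟩ := intermediate_value_Icc (by norm_num : (1 : ℝ) ≤ 3)
      (hcont n).continuousOn ⟨hnonpos n, (hpos n hn 3 (by norm_num)).le⟩
    exact hc.1.trans (hmax c hc0)
  · by_contra! h
    exact (hpos n hn _ h).ne' hroot

theorem g_bounds (k : ℕ) (hk : 1 ≤ k) (G : ℕ → ℝ → ℝ)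
    (hG0 : ∀ x, G 0 x = -1) (hG1 : ∀ x, G 1 x = x - 1)
    (hG : ∀ n, 2 ≤ n → ∀ x, G n x = x ^ k * G (n - 1) x + G (n - 2) x)
    (g : ℕ → ℝ)
    (hg : ∀ n, 1 ≤ n → G n (g n) = 0 ∧ ∀ x : ℝ, G n x = 0 → x ≤ g n) :
    ∀ n, 1 ≤ n → 1 ≤ g n ∧ g n ≤ 2 :=
  g_bounds_general k G hG0 hG1 hG g hg
end

section
/- Fix a positive integer k, let ξ^{(k)} be the unique positive real root of H^{(k)}(x) = x^k − x^{k−1} + x − 2, and let g_n be the maximal real root of G_n^{(k)}. Then g_n → ξ^{(k)} as n → ∞. -/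
open Filter Set

/-!
Writing `α > 1` for the positive root of `t² = xᵏ t + 1`, whose other root is `-α⁻¹`, the
recurrence gives `(α + α⁻¹) Gₙ(x) = αⁿ c(x) - (-α⁻¹)ⁿ (x - 1 + α)` with `c(x) = x - 1 - α⁻¹`.
So `Gₙ(x)` eventually has the sign of `c(x)`, uniformly on `[x₀, ∞)` when `c(x₀) > 0`.
The function `c` is strictly increasing and vanishes exactly at `ξ` (there `α = (ξ - 1)⁻¹`),
so for large `n` the polynomial `Gₙ` changes sign just below `ξ` and has no root beyond
any point just above `ξ`.
-/

noncomputable def dominantRoot (a : ℝ) : ℝ := (a + √(a ^ 2 + 4)) / 2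

lemma dominantRoot_sq (a : ℝ) : dominantRoot a ^ 2 = a * dominantRoot a + 1 := by
  have h := Real.sq_sqrt (show 0 ≤ a ^ 2 + 4 by positivity)
  unfold dominantRoot
  linear_combination h / 4

lemma le_dominantRoot (a : ℝ) : a ≤ dominantRoot a := by
  have : a ≤ √(a ^ 2 + 4) := Real.le_sqrt_of_sq_le (by linarith)
  unfold dominantRoot
  linarith

lemma dominantRoot_pos (a : ℝ) : 0 < dominantRoot a := by
  have : |a| < √(a ^ 2 + 4) := Real.lt_sqrt_of_sq_lt (by rw [sq_abs]; linarith)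
  unfold dominantRoot
  linarith [neg_abs_le a]

lemma one_lt_dominantRoot {a : ℝ} (ha : 0 < a) : 1 < dominantRoot a := by
  have hα := dominantRoot_pos a
  nlinarith [dominantRoot_sq a]

lemma dominantRoot_mono : Monotone dominantRoot := by
  intro a b hab
  have hp := dominantRoot_pos a
  have hq := dominantRoot_pos b
  have key : (dominantRoot a - dominantRoot b) * (dominantRoot a * dominantRoot b + 1) =
      (a - b) * (dominantRoot a * dominantRoot b) := by
    linear_combination dominantRoot b * dominantRoot_sq a - dominantRoot a * dominantRoot_sq b
  nlinarith [mul_pos hp hq]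

lemma dominantRoot_eq_of_sq {a t : ℝ} (ht : 0 < t) (h : t ^ 2 = a * t + 1) :
    dominantRoot a = t := by
  have hp := dominantRoot_pos a
  have key : (dominantRoot a - t) * (dominantRoot a * t + 1) = 0 := by
    linear_combination t * dominantRoot_sq a - dominantRoot a * h
  rcases mul_eq_zero.1 key with h | h
  · linarith
  · nlinarith [mul_pos hp ht]

section Recurrence

variable {R : Type*} [CommRing R] {a r s : R} {u : ℕ → R}

theorem sub_mul_eq_pow_mul_of_recurrence (hu : ∀ n, u (n + 2) = a * u (n + 1) + u n)
    (hsum : r + s = a) (hprod : r * s = -1) (n : ℕ) :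
    u (n + 1) - s * u n = r ^ n * (u 1 - s * u 0) := by
  induction n with
  | zero => simp
  | succ n ih =>
    rw [pow_succ]
    linear_combination hu n + r * ih - u (n + 1) * hsum + u n * hprod

theorem sub_mul_eq_of_recurrence (hu : ∀ n, u (n + 2) = a * u (n + 1) + u n)
    (hsum : r + s = a) (hprod : r * s = -1) (n : ℕ) :
    (r - s) * u n = r ^ n * (u 1 - s * u 0) - s ^ n * (u 1 - r * u 0) := by
  linear_combination sub_mul_eq_pow_mul_of_recurrence hu hsum hprod n -
    sub_mul_eq_pow_mul_of_recurrence hu (s := r) (by rw [add_comm, hsum])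
      (by rw [mul_comm, hprod]) n

end Recurrence

lemma pos_mul_of_recurrence {a : ℝ} {u : ℕ → ℝ} (hu : ∀ n, u (n + 2) = a * u (n + 1) + u n)
    {n : ℕ} (h : |u 1 - dominantRoot a * u 0| <
      dominantRoot a ^ (2 * n) * |u 1 + (dominantRoot a)⁻¹ * u 0|) :
    0 < (u 1 + (dominantRoot a)⁻¹ * u 0) * u n := by
  set α := dominantRoot a
  set c := u 1 + α⁻¹ * u 0
  set c' := u 1 - α * u 0
  have hα : 0 < α := dominantRoot_pos a
  have hsum : α + -α⁻¹ = a := by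
    field_simp
    linear_combination dominantRoot_sq a
  have hbinet := sub_mul_eq_of_recurrence hu hsum (by field_simp) n
  have hc : 0 < |c| := pos_of_mul_pos_right ((abs_nonneg _).trans_lt h) (by positivity)
  have key : α ^ n * (α + α⁻¹) * (c * u n) = α ^ (2 * n) * |c| ^ 2 - (-1) ^ n * (c * c') := by
    have hpow : α ^ n * (-α⁻¹) ^ n = (-1) ^ n := by
      rw [← mul_pow, mul_neg, mul_inv_cancel₀ hα.ne']
    rw [sq_abs, pow_mul', sq]
    linear_combination (α ^ n * c) * hbinet - c * c' * hpow
  have herr : (-1) ^ n * (c * c') ≤ |c| * |c'| :=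
    (le_abs_self _).trans (by simp [abs_mul])
  have : |c| * |c'| < α ^ (2 * n) * |c| ^ 2 := by
    calc |c| * |c'| < |c| * (α ^ (2 * n) * |c|) := mul_lt_mul_of_pos_left h hc
      _ = α ^ (2 * n) * |c| ^ 2 := by ring
  have hpos : 0 < α ^ n * (α + α⁻¹) * (c * u n) := by rw [key]; linarith
  exact pos_of_mul_pos_right hpos (by positivity)

/-- Up to the positive factor `α + α⁻¹`, the coefficient of `αⁿ` in `Gₙ(x)`. -/
noncomputable def growthCoeff (k : ℕ) (x : ℝ) : ℝ := x - 1 - (dominantRoot (x ^ k))⁻¹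

lemma growthCoeff_strictMonoOn (k : ℕ) : StrictMonoOn (growthCoeff k) (Ici 0) := by
  intro x hx y _ hxy
  have : (dominantRoot (y ^ k))⁻¹ ≤ (dominantRoot (x ^ k))⁻¹ :=
    inv_anti₀ (dominantRoot_pos _) (dominantRoot_mono (pow_le_pow_left₀ hx hxy.le k))
  unfold growthCoeff
  linarith

lemma one_lt_of_root {k : ℕ} {ξ : ℝ} (hξ : 0 < ξ) (hroot : ξ ^ k - ξ ^ (k - 1) + ξ - 2 = 0) :
    1 < ξ := by
  by_contra! h
  have := pow_le_pow_of_le_one hξ.le h (Nat.sub_le k 1)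
  linarith

lemma growthCoeff_eq_zero {k : ℕ} (hk : 1 ≤ k) {ξ : ℝ} (hξ : 1 < ξ)
    (hroot : ξ ^ k - ξ ^ (k - 1) + ξ - 2 = 0) : growthCoeff k ξ = 0 := by
  have hpow : ξ ^ k = ξ ^ (k - 1) * ξ := by rw [← pow_succ, Nat.sub_add_cancel hk]
  have hne : ξ - 1 ≠ 0 := by linarith
  have hα : dominantRoot (ξ ^ k) = (ξ - 1)⁻¹ := by
    refine dominantRoot_eq_of_sq (inv_pos.2 (by linarith)) ?_
    field_simp
    linear_combination hpow - ξ * hroot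
  rw [growthCoeff, hα, inv_inv, sub_self]

section Sequence

variable {k : ℕ} {G : ℕ → ℝ → ℝ}

lemma continuous_of_recurrence_s16 (h0 : Continuous (G 0)) (h1 : Continuous (G 1))
    (hG : ∀ n x, G (n + 2) x = x ^ k * G (n + 1) x + G n x) (n : ℕ) : Continuous (G n) := by
  induction n using Nat.twoStepInduction with
  | zero => exact h0
  | one => exact h1
  | more n ihn ihn1 =>
    rw [show G (n + 2) = fun x => x ^ k * G (n + 1) x + G n x from funext (hG n)]
    fun_prop

lemma growthCoeff_mul_pos {x : ℝ} (hx : 0 < x) {u : ℕ → ℝ} (hu0 : u 0 = -1)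
    (hu1 : u 1 = x - 1) (hu : ∀ n, u (n + 2) = x ^ k * u (n + 1) + u n) {n : ℕ}
    (h : x - 1 + dominantRoot (x ^ k) <
      dominantRoot (x ^ k) ^ (2 * n) * |growthCoeff k x|) :
    0 < growthCoeff k x * u n := by
  have hα := one_lt_dominantRoot (pow_pos hx k)
  have hc : u 1 + (dominantRoot (x ^ k))⁻¹ * u 0 = growthCoeff k x := by
    rw [hu0, hu1, growthCoeff]
    ring
  rw [← hc]
  refine pos_mul_of_recurrence hu ?_
  rwa [hc, hu0, hu1, abs_of_pos (by linarith), mul_neg_one, sub_neg_eq_add]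

lemma eventually_neg_of_growthCoeff_neg (hG0 : ∀ x, G 0 x = -1) (hG1 : ∀ x, G 1 x = x - 1)
    (hG : ∀ n x, G (n + 2) x = x ^ k * G (n + 1) x + G n x) {x : ℝ} (hx : 0 < x)
    (hc : growthCoeff k x < 0) : ∀ᶠ n in atTop, G n x < 0 := by
  set α := dominantRoot (x ^ k)
  have hα : 1 < α := one_lt_dominantRoot (pow_pos hx k)
  have hgrowth : Tendsto (fun n => (α ^ 2) ^ n * |growthCoeff k x|) atTop atTop :=
    (tendsto_pow_atTop_atTop_of_one_lt (one_lt_pow₀ hα two_ne_zero)).atTop_mul_const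
      (abs_pos.2 hc.ne)
  filter_upwards [hgrowth.eventually_gt_atTop (x - 1 + α)] with n hn
  rw [← pow_mul] at hn
  exact neg_of_mul_pos_right (growthCoeff_mul_pos hx (u := (G · x)) (hG0 x) (hG1 x) (fun n => hG n x) hn) hc.le

lemma eventually_forall_pos_of_growthCoeff_pos (hk : 1 ≤ k) (hG0 : ∀ x, G 0 x = -1)
    (hG1 : ∀ x, G 1 x = x - 1) (hG : ∀ n x, G (n + 2) x = x ^ k * G (n + 1) x + G n x)
    {x₀ : ℝ} (hx₀ : 0 < x₀) (hc₀ : 0 < growthCoeff k x₀) :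
    ∀ᶠ n in atTop, ∀ x, x₀ ≤ x → 0 < G n x := by
  have hα₀ : 1 < dominantRoot (x₀ ^ k) := one_lt_dominantRoot (pow_pos hx₀ k)
  have hgrowth := (tendsto_pow_atTop_atTop_of_one_lt hα₀).atTop_mul_const hc₀
  filter_upwards [hgrowth.eventually_gt_atTop 2, eventually_ge_atTop 1] with n hn hn1 x hx
  have hx0 : 0 < x := hx₀.trans_le hx
  set α := dominantRoot (x ^ k)
  have hα : 1 < α := one_lt_dominantRoot (pow_pos hx0 k)
  have hαα₀ : dominantRoot (x₀ ^ k) ≤ α := dominantRoot_mono (pow_le_pow_left₀ hx₀.le hx k)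
  have hcc₀ : growthCoeff k x₀ ≤ growthCoeff k x :=
    (growthCoeff_strictMonoOn k).monotoneOn hx₀.le (hx₀.le.trans hx) hx
  have hxα : x - 1 ≤ α := by
    refine le_trans ?_ (le_dominantRoot _)
    rcases le_total x 1 with h | h
    · linarith [pow_pos hx0 k]
    · linarith [le_self_pow₀ h (by omega : k ≠ 0)]
  have hc : 0 < growthCoeff k x := hc₀.trans_le hcc₀
  refine pos_of_mul_pos_right (growthCoeff_mul_pos hx0 (u := (G · x)) (hG0 x) (hG1 x) (fun n => hG n x) ?_) hc.le
  calc x - 1 + α ≤ α * 2 := by linarith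
    _ < α * (dominantRoot (x₀ ^ k) ^ n * growthCoeff k x₀) := by gcongr
    _ ≤ α * (α ^ n * growthCoeff k x) := by gcongr
    _ = α ^ (n + 1) * growthCoeff k x := by ring
    _ ≤ α ^ (2 * n) * |growthCoeff k x| := by
      rw [abs_of_pos hc]
      gcongr
      · exact hα.le
      · omega

end Sequence

theorem g_tendsto_xi_general (k : ℕ) (hk : 1 ≤ k) (G : ℕ → ℝ → ℝ)
    (hG0 : ∀ x, G 0 x = -1) (hG1 : ∀ x, G 1 x = x - 1)
    (hG : ∀ n, 2 ≤ n → ∀ x, G n x = x ^ k * G (n - 1) x + G (n - 2) x)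
    (ξ : ℝ) (hξpos : 0 < ξ) (hξroot : ξ ^ k - ξ ^ (k - 1) + ξ - 2 = 0)
    (g : ℕ → ℝ)
    (hg : ∀ n, 1 ≤ n → G n (g n) = 0 ∧ ∀ x : ℝ, G n x = 0 → x ≤ g n) :
    Filter.Tendsto g Filter.atTop (nhds ξ) := by
  have hrec : ∀ n x, G (n + 2) x = x ^ k * G (n + 1) x + G n x := fun n => hG (n + 2) (by omega)
  have hcont := continuous_of_recurrence_s16 (continuous_const.congr fun x => (hG0 x).symm)
    ((continuous_id.sub continuous_const).congr fun x => (hG1 x).symm) hrec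
  have hξ1 := one_lt_of_root hξpos hξroot
  have hcξ := growthCoeff_eq_zero hk hξ1 hξroot
  have hpos {x₀ : ℝ} (h : ξ < x₀) : ∀ᶠ n in atTop, ∀ x, x₀ ≤ x → 0 < G n x :=
    eventually_forall_pos_of_growthCoeff_pos hk hG0 hG1 hrec (hξpos.trans h) <|
      hcξ ▸ growthCoeff_strictMonoOn k hξpos.le (hξpos.trans h).le h
  refine tendsto_order.2 ⟨fun a ha => ?_, fun b hb => ?_⟩
  · set x₁ := max a (ξ / 2)
    have hx₁ : 0 < x₁ := lt_max_of_lt_right (by linarith)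
    have hx₁ξ : x₁ < ξ := max_lt ha (by linarith)
    have hneg := eventually_neg_of_growthCoeff_neg hG0 hG1 hrec hx₁ <|
      hcξ ▸ growthCoeff_strictMonoOn k hx₁.le hξpos.le hx₁ξ
    filter_upwards [hneg, hpos (lt_add_one ξ), eventually_ge_atTop 1] with n hn₁ hn₂ hn
    obtain ⟨r, hr, hr0⟩ := intermediate_value_Ioo (by linarith) (hcont n).continuousOn
      ⟨hn₁, hn₂ _ le_rfl⟩
    exact (le_max_left _ _).trans_lt (hr.1.trans_le ((hg n hn).2 r hr0))
  · filter_upwards [hpos (by linarith : ξ < (ξ + b) / 2), eventually_ge_atTop 1] with n hn₂ hn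
    by_contra! h
    exact (hn₂ (g n) (by linarith)).ne' (hg n hn).1

theorem g_tendsto_xi (k : ℕ) (hk : 1 ≤ k) (G : ℕ → ℝ → ℝ)
    (hG0 : ∀ x, G 0 x = -1) (hG1 : ∀ x, G 1 x = x - 1)
    (hG : ∀ n, 2 ≤ n → ∀ x, G n x = x ^ k * G (n - 1) x + G (n - 2) x)
    (ξ : ℝ) (hξpos : 0 < ξ) (hξroot : ξ ^ k - ξ ^ (k - 1) + ξ - 2 = 0)
    (hξuniq : ∀ x : ℝ, 0 < x → x ^ k - x ^ (k - 1) + x - 2 = 0 → x = ξ)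
    (g : ℕ → ℝ)
    (hg : ∀ n, 1 ≤ n → G n (g n) = 0 ∧ ∀ x : ℝ, G n x = 0 → x ≤ g n) :
    Filter.Tendsto g Filter.atTop (nhds ξ) :=
  g_tendsto_xi_general k hk G hG0 hG1 hG ξ hξpos hξroot g hg
end
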